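/- Let C_L be a chirp of slope a (i.e., C_L = C_{L_a,b} for some b) and L = L_a = {(τ,aτ)}. Then the ambiguity function A(C_L,C_L)[v] = ⟨π(v)C_L, C_L⟩ satisfies: A(C_L,C_L)[v] = ψ_L(v) (a complex number of absolute value 1, given by the eigenvalue character) when v ∈ L, and A(C_L,C_L)[v] = 0 when v ∉ L. -/

import Mathlib

open Complex BigOperators Finset

noncomputable def ee (N : ℕ) (t : ZMod N) : ℂ :=
  Complex.exp (2 * Real.pi * Complex.I * (t.val : ℂ) / (N : ℂ))

noncomputable def heis (N : ℕ) (τ ω : ZMod N) (f : ZMod N → ℂ) : ZMod N → ℂ :=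
  fun n => ee N (-(2⁻¹ * τ * ω)) * ee N (ω * n) * f (n - τ)

noncomputable def inn (N : ℕ) [NeZero N] (f g : ZMod N → ℂ) : ℂ :=
  ∑ n : ZMod N, f n * (starRingEnd ℂ) (g n)

noncomputable def amb (N : ℕ) [NeZero N] (f g : ZMod N → ℂ) (τ ω : ZMod N) : ℂ :=
  inn N (heis N τ ω f) g

noncomputable def chirp (N : ℕ) (a b : ZMod N) : ZMod N → ℂ :=
  fun n => ee N (2⁻¹ * a * n ^ 2 - b * n) / (Real.sqrt N : ℝ)

def delta (N : ℕ) (b : ZMod N) : ZMod N → ℂ :=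
  fun n => if n = b then 1 else 0

/-! Because 2 is invertible modulo the odd number `N`, the quadratic terms cancel in the phase of
`π(τ, ω) C n · conj (C n)`, which is the linear character `n ↦ e(n (ω - a τ))` times the constant
`e(b τ + 2⁻¹ τ (a τ - ω))`. Summing over `n`, orthogonality of characters gives `0` off the line
`ω = a τ`, and `e(b τ)` on it. -/

section AdditiveCharacter

variable {N : ℕ} [NeZero N]

lemma ee_eq_toCircle (t : ZMod N) : ee N t = ZMod.toCircle t :=
  (ZMod.toCircle_apply t).symm

lemma ee_add (s t : ZMod N) : ee N (s + t) = ee N s * ee N t := by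
  simp only [ee_eq_toCircle, AddChar.map_add_eq_mul, Circle.coe_mul]

lemma conj_ee (t : ZMod N) : starRingEnd ℂ (ee N t) = ee N (-t) := by
  rw [ee_eq_toCircle, ee_eq_toCircle, ← Circle.coe_inv_eq_conj, AddChar.map_neg_eq_inv]

lemma norm_ee (t : ZMod N) : ‖ee N t‖ = 1 := by
  rw [ee_eq_toCircle]
  exact Circle.norm_coe _

lemma sum_ee_mul (c : ZMod N) : ∑ n : ZMod N, ee N (n * c) = if c = 0 then (N : ℂ) else 0 := by
  simpa only [ee_eq_toCircle, ← ZMod.stdAddChar_apply, ZMod.card, Nat.cast_ite, Nat.cast_zero] using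
    AddChar.sum_mulShift c (ZMod.isPrimitive_stdAddChar N)

end AdditiveCharacter

lemma ZMod.two_mul_inv_two_of_odd {N : ℕ} (hodd : Odd N) : (2 : ZMod N) * 2⁻¹ = 1 := by
  exact_mod_cast ZMod.coe_mul_inv_eq_one 2 (Nat.coprime_two_left.mpr hodd)

section Chirp

variable {N : ℕ} [NeZero N]

lemma heis_chirp_mul_conj_chirp (hodd : Odd N) (a b τ ω n : ZMod N) :
    heis N τ ω (chirp N a b) n * starRingEnd ℂ (chirp N a b n)
      = ee N (b * τ + 2⁻¹ * τ * (a * τ - ω)) * ee N (n * (ω - a * τ)) / N := by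
  have hsqrt : ((Real.sqrt N : ℝ) : ℂ) * ((Real.sqrt N : ℝ) : ℂ) = N := by
    exact_mod_cast Real.mul_self_sqrt (Nat.cast_nonneg N)
  have hphase : -(2⁻¹ * τ * ω) + ω * n + (2⁻¹ * a * (n - τ) ^ 2 - b * (n - τ))
      + -(2⁻¹ * a * n ^ 2 - b * n) = b * τ + 2⁻¹ * τ * (a * τ - ω) + n * (ω - a * τ) := by
    linear_combination (-(a * n * τ)) * ZMod.two_mul_inv_two_of_odd hodd
  simp only [heis, chirp, map_div₀, conj_ee, Complex.conj_ofReal]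
  rw [← ee_add (b * τ + 2⁻¹ * τ * (a * τ - ω)), ← hphase, ← hsqrt]
  simp only [ee_add]
  ring

lemma amb_chirp (hodd : Odd N) (a b τ ω : ZMod N) :
    amb N (chirp N a b) (chirp N a b) τ ω
      = ee N (b * τ + 2⁻¹ * τ * (a * τ - ω)) * (∑ n : ZMod N, ee N (n * (ω - a * τ))) / N := by
  simp only [amb, inn, heis_chirp_mul_conj_chirp hodd, Finset.mul_sum, Finset.sum_div]

lemma amb_chirp_eq_ite (hodd : Odd N) (a b τ ω : ZMod N) :
    amb N (chirp N a b) (chirp N a b) τ ω = if ω = a * τ then ee N (b * τ) else 0 := by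
  rw [amb_chirp hodd, sum_ee_mul]
  by_cases hω : ω = a * τ
  · rw [if_pos (sub_eq_zero.mpr hω), if_pos hω, hω, sub_self, mul_zero, add_zero, mul_div_assoc,
      div_self (Nat.cast_ne_zero.mpr (NeZero.ne N)), mul_one]
  · rw [if_neg (sub_ne_zero.mpr hω), if_neg hω, mul_zero, zero_div]

end Chirp

theorem chirp_ambiguity_supported_on_line_general (N : ℕ) (hodd : Odd N) [NeZero N]
    (a b : ZMod N) :
    ∃ ψ : ZMod N → ℂ,
      (∀ τ : ZMod N, ‖ψ τ‖ = 1 ∧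
        amb N (chirp N a b) (chirp N a b) τ (a * τ) = ψ τ) ∧
      (∀ τ ω : ZMod N, ω ≠ a * τ → amb N (chirp N a b) (chirp N a b) τ ω = 0) :=
  ⟨fun τ => ee N (b * τ),
    fun τ => ⟨norm_ee _, by rw [amb_chirp_eq_ite hodd, if_pos rfl]⟩,
    fun τ ω hω => by rw [amb_chirp_eq_ite hodd, if_neg hω]⟩

theorem chirp_ambiguity_supported_on_line (N : ℕ) (hN : N.Prime) (hodd : Odd N) [NeZero N]
    (a b : ZMod N) :
    ∃ ψ : ZMod N → ℂ,
      (∀ τ : ZMod N, ‖ψ τ‖ = 1 ∧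
        amb N (chirp N a b) (chirp N a b) τ (a * τ) = ψ τ) ∧
      (∀ τ ω : ZMod N, ω ≠ a * τ → amb N (chirp N a b) (chirp N a b) τ ω = 0) :=
  chirp_ambiguity_supported_on_line_general N hodd a b
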